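/- Let k ≥ 1 odd, n > 2k, μ > 0, q = (n+2)k/(n-2k). Then v(r) = [ (binom(n,k)·((n-2k)/k · μ)^k)^{1/(k+1)} / (1 + μ r²) ]^{(n-2k)/(2k)} satisfies c_{n,k} r^{1-n}(r^{n-k}(v')^k)' + v^q = 0 for all r > 0. -/

import Mathlib

/-!
Writing `P = 1 + μ r²`, the profile is `v = a^θ P^(-θ)` with `θ = (n - 2k)/(2k)`, so
`v' = -2μθ a^θ r P^(-θ-1)`. Since `k` is odd, the flux is
`r^(n-k) (v')^k = -(2μθ)^k a^(θk) · r^n P^(-n/2)`, and `r^n P^(-n/2)` has derivative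
`n r^(n-1) P^(-n/2-1)`. The critical exponent makes `v^q = a^(θq) P^(-n/2-1)` carry the same
power of `P`, and the amplitude `a^(k+1) = binom(n,k) (2μθ)^k` balances the constants.
-/

open Real

/-- The Clément–Manásevich–Mitidieri explicit radial profile at the Tso critical
exponent. -/
noncomputable def cmmProfile (n k : ℕ) (μ : ℝ) : ℝ → ℝ :=
  fun r => (((n.choose k : ℝ) * ((((n : ℝ) - 2 * k) / k) * μ) ^ k) ^ ((1 : ℝ) / (k + 1)) /
      (1 + μ * r ^ 2)) ^ (((n : ℝ) - 2 * k) / (2 * k))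

section Bubble

variable {μ : ℝ}

lemma one_add_mul_sq_pos (hμ : 0 ≤ μ) (x : ℝ) : 0 < 1 + μ * x ^ 2 := by positivity

lemma hasDerivAt_one_add_mul_sq_rpow (hμ : 0 ≤ μ) (p x : ℝ) :
    HasDerivAt (fun y => (1 + μ * y ^ 2) ^ p)
      (2 * μ * x * p * (1 + μ * x ^ 2) ^ (p - 1)) x := by
  have h : HasDerivAt (fun y : ℝ => 1 + μ * y ^ 2) (2 * μ * x) x := by
    refine (((hasDerivAt_pow 2 x).const_mul μ).const_add 1).congr_deriv ?_
    push_cast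
    ring
  exact h.rpow_const (Or.inl (one_add_mul_sq_pos hμ x).ne')

lemma hasDerivAt_rpow_mul_one_add_mul_sq_rpow_neg_half (hμ : 0 ≤ μ) (m : ℝ) {x : ℝ}
    (hx : 0 < x) :
    HasDerivAt (fun y => y ^ m * (1 + μ * y ^ 2) ^ (-(m / 2)))
      (m * x ^ (m - 1) * (1 + μ * x ^ 2) ^ (-(m / 2) - 1)) x := by
  have hP := one_add_mul_sq_pos hμ x
  refine ((hasDerivAt_rpow_const (p := m) (Or.inl hx.ne')).mul
    (hasDerivAt_one_add_mul_sq_rpow hμ (-(m / 2)) x)).congr_deriv ?_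
  have hPpow :
      (1 + μ * x ^ 2) ^ (-(m / 2)) = (1 + μ * x ^ 2) ^ (-(m / 2) - 1) * (1 + μ * x ^ 2) := by
    rw [← rpow_add_one hP.ne']
    ring_nf
  have hxpow : x ^ m = x ^ (m - 1) * x := by
    rw [← rpow_add_one hx.ne']
    ring_nf
  rw [hPpow, hxpow]
  ring

lemma hasDerivAt_div_one_add_mul_sq_rpow {a : ℝ} (ha : 0 ≤ a) (hμ : 0 ≤ μ) (θ x : ℝ) :
    HasDerivAt (fun y => (a / (1 + μ * y ^ 2)) ^ θ)
      (-(2 * μ * θ) * a ^ θ * x * (1 + μ * x ^ 2) ^ (-θ - 1)) x := by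
  have hv :
      (fun y => (a / (1 + μ * y ^ 2)) ^ θ) = fun y => a ^ θ * (1 + μ * y ^ 2) ^ (-θ) := by
    funext y
    rw [div_rpow ha (one_add_mul_sq_pos hμ y).le, rpow_neg (one_add_mul_sq_pos hμ y).le,
      div_eq_mul_inv]
  rw [hv]
  refine ((hasDerivAt_one_add_mul_sq_rpow hμ (-θ) x).const_mul (a ^ θ)).congr_deriv ?_
  ring

lemma rpow_mul_deriv_div_one_add_mul_sq_rpow_pow {a : ℝ} (ha : 0 ≤ a) (hμ : 0 ≤ μ)
    {k : ℕ} (hk : Odd k) {n θ : ℝ} (hθ : (θ + 1) * k = n / 2) {x : ℝ} (hx : 0 < x) :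
    x ^ (n - k) * (deriv (fun y => (a / (1 + μ * y ^ 2)) ^ θ) x) ^ k
      = -((2 * μ * θ) ^ k * a ^ (θ * k)) * (x ^ n * (1 + μ * x ^ 2) ^ (-(n / 2))) := by
  have hP := one_add_mul_sq_pos hμ x
  rw [(hasDerivAt_div_one_add_mul_sq_rpow ha hμ θ x).deriv, neg_mul, neg_mul, neg_mul,
    hk.neg_pow, mul_pow, mul_pow, mul_pow, ← rpow_natCast (a ^ θ), ← rpow_mul ha,
    ← rpow_natCast ((1 + μ * x ^ 2) ^ (-θ - 1)), ← rpow_mul hP.le, ← rpow_natCast x k]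
  have hPexp : (-θ - 1) * k = -(n / 2) := by linear_combination -hθ
  have hxexp : x ^ (n - k) * x ^ (k : ℝ) = x ^ n := by
    rw [← rpow_add hx]
    ring_nf
  rw [hPexp, ← hxexp]
  ring

theorem radial_hessian_eq_of_amplitude {a : ℝ} (ha : 0 < a) (hμ : 0 ≤ μ) {k : ℕ}
    (hk : Odd k) {n θ q c : ℝ} (hθ : (θ + 1) * k = n / 2) (hq : θ * q = (n + 2) / 2)
    (hamp : a ^ (k + 1) = n * c * (2 * μ * θ) ^ k) {r : ℝ} (hr : 0 < r) :
    c * r ^ (1 - n) *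
        deriv (fun ρ => ρ ^ (n - k) * (deriv (fun y => (a / (1 + μ * y ^ 2)) ^ θ) ρ) ^ k) r +
      ((a / (1 + μ * r ^ 2)) ^ θ) ^ q = 0 := by
  have hP := one_add_mul_sq_pos hμ r
  set K := (2 * μ * θ) ^ k * a ^ (θ * k)
  have hflux : (fun ρ => ρ ^ (n - k) * (deriv (fun y => (a / (1 + μ * y ^ 2)) ^ θ) ρ) ^ k)
      =ᶠ[nhds r] fun ρ => -K * (ρ ^ n * (1 + μ * ρ ^ 2) ^ (-(n / 2))) := by
    filter_upwards [eventually_gt_nhds hr] with ρ hρ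
    exact rpow_mul_deriv_div_one_add_mul_sq_rpow_pow ha.le hμ hk hθ hρ
  have hpow :
      ((a / (1 + μ * r ^ 2)) ^ θ) ^ q = n * c * K * (1 + μ * r ^ 2) ^ (-(n / 2) - 1) := by
    have hexp : θ * q = θ * k + (k + 1 : ℕ) := by push_cast; linear_combination hq - hθ
    rw [← rpow_mul (div_pos ha hP).le, div_rpow ha.le hP.le, hexp, rpow_add ha, rpow_natCast,
      hamp, div_eq_mul_inv, ← rpow_neg hP.le, show -(θ * k + (k + 1 : ℕ)) = -(n / 2) - 1 by
        push_cast; linear_combination -hθ]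
    ring
  have hr1 : r ^ (1 - n) * r ^ (n - 1) = 1 := by
    rw [← rpow_add hr]
    simp
  rw [hflux.deriv_eq, ((hasDerivAt_rpow_mul_one_add_mul_sq_rpow_neg_half hμ n hr).const_mul
    (-K)).deriv, hpow]
  linear_combination (-(n * c * K) * (1 + μ * r ^ 2) ^ (-(n / 2) - 1)) * hr1

end Bubble

theorem stmt17_general (n k : ℕ) (μ q c : ℝ) (hkodd : Odd k) (hnk : 2 * k < n)
    (hμ : 0 < μ) (hq : q = ((n : ℝ) + 2) * k / ((n : ℝ) - 2 * k))
    (hc : c = (1 / n) * (n.choose k)) :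
    ∀ r > (0 : ℝ),
      c * r ^ ((1 : ℝ) - n) *
          deriv (fun ρ => ρ ^ ((n : ℝ) - k) * (deriv (cmmProfile n k μ) ρ) ^ k) r +
        (cmmProfile n k μ r) ^ q = 0 := by
  intro r hr
  have hk : (k : ℝ) ≠ 0 := by exact_mod_cast hkodd.pos.ne'
  have hn : (n : ℝ) ≠ 0 := by exact_mod_cast (by omega : n ≠ 0)
  have hgap : 0 < (n : ℝ) - 2 * k := by
    rw [sub_pos]
    exact_mod_cast hnk
  have hB : 0 < ((n : ℝ) - 2 * k) / k * μ := by positivity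
  have hC : 0 < (n.choose k : ℝ) := by exact_mod_cast Nat.choose_pos (by omega)
  have hamp :
      (((n.choose k : ℝ) * (((n : ℝ) - 2 * k) / k * μ) ^ k) ^ ((1 : ℝ) / (k + 1))) ^ (k + 1)
        = n * c * (2 * μ * (((n : ℝ) - 2 * k) / (2 * k))) ^ k := by
    rw [← rpow_natCast, ← rpow_mul (by positivity), hc]
    push_cast
    rw [one_div_mul_cancel (by positivity), rpow_one]
    field_simp
  exact radial_hessian_eq_of_amplitude (by positivity) hμ.le hkodd
    (by field_simp; ring) (by rw [hq]; field_simp) hamp hr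

/-- For `k` odd, `n > 2k`, `μ > 0` and `q = (n+2)k/(n-2k)`, the profile `v = cmmProfile`
satisfies `c_{n,k} r^{1-n}(r^{n-k}(v')^k)' + v^q = 0` for all `r > 0`. -/
theorem stmt17 (n k : ℕ) (μ q c : ℝ) (hk : 1 ≤ k) (hkodd : Odd k) (hnk : 2 * k < n)
    (hμ : 0 < μ) (hq : q = ((n : ℝ) + 2) * k / ((n : ℝ) - 2 * k))
    (hc : c = (1 / n) * (n.choose k)) :
    ∀ r > (0 : ℝ),
      c * r ^ ((1 : ℝ) - n) *
          deriv (fun ρ => ρ ^ ((n : ℝ) - k) * (deriv (cmmProfile n k μ) ρ) ^ k) r +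
        (cmmProfile n k μ r) ^ q = 0 :=
  stmt17_general n k μ q c hkodd hnk hμ hq hc
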